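/- arXiv:1001.2941 — 2 statements merged into one kernel-verified Lean document; each statement's English description precedes it below -/
import Mathlib

section
/- Let Ω ⊆ ℂ^n be open, F : Ω → ℂ^N holomorphic, W ⊆ Ω open with ‖F(q)‖ < 1 for all q ∈ W, and let p ∈ Ω ∩ ∂W with ‖F(p)‖ = 1. Fix v ∈ ℂ^n and suppose that g_N(F(q))(dF|_q v, dF|_q v) remains bounded as q → p within W. Then dF|_p v = 0, i.e., ∑_{ξ=1}^n (∂F_l/∂z_ξ)(p)·v_ξ = 0 for every component l = 1, …, N. -/
/-! The Bergman metric dominates `‖w‖² / (1 - ‖z‖²)`, so a bound `C` on the pullback metric gives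
`‖dF_q v‖² ≤ C (1 - ‖F q‖²)`, which tends to `0` as `q → p` within `W` because `‖F p‖ = 1`. Since
`q ↦ dF_q v` is continuous at `p` (holomorphic maps are `C¹`) and `p ∈ closure W`, `dF_p v = 0`. -/

open Filter Set Topology

noncomputable def bergman {N : ℕ} (z v : EuclideanSpace ℂ (Fin N)) : ℝ :=
  ((1 - ‖z‖ ^ 2) * ‖v‖ ^ 2 +
      ‖∑ j, v j * (starRingEnd ℂ) (z j)‖ ^ 2) / (1 - ‖z‖ ^ 2) ^ 2

theorem ContinuousOn.tendstoLocallyUniformlyOn {α β γ : Type*} [TopologicalSpace α]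
    [TopologicalSpace β] [UniformSpace γ] {f : α → β → γ} {p : α} {u : Set α} {U : Set β}
    (h : ContinuousOn ↿f (u ×ˢ U)) (hu : u ∈ 𝓝 p) (hU : IsOpen U) :
    TendstoLocallyUniformlyOn f (f p) (𝓝 p) U := by
  rw [tendstoLocallyUniformlyOn_iff_forall_tendsto]
  intro t ht
  have hc : ContinuousAt ↿f (p, t) := h.continuousAt (prod_mem_nhds hu (hU.mem_nhds ht))
  have hle : 𝓝 p ×ˢ 𝓝[U] t ≤ 𝓝 (p, t) := by
    rw [nhds_prod_eq]; exact prod_mono le_rfl nhdsWithin_le_nhds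
  have hfixed : Tendsto (fun y : α × β => f p y.2) (𝓝 p ×ˢ 𝓝[U] t) (𝓝 (f p t)) :=
    hc.tendsto.comp (tendsto_const_nhds.prodMk_nhds (tendsto_snd.mono_right nhdsWithin_le_nhds))
  exact (hfixed.prodMk_nhds (hc.tendsto.mono_left hle)).mono_right (nhds_le_uniformity _)

section ComplexLines

variable {E G : Type*} [NormedAddCommGroup E] [NormedSpace ℂ E]
  [NormedAddCommGroup G] [NormedSpace ℂ G] {f : E → G} {Ω : Set E}

theorem hasDerivAt_comp_add_smul {q v : E} {t : ℂ} (hf : DifferentiableAt ℂ f (q + t • v)) :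
    HasDerivAt (fun s : ℂ => f (q + s • v)) (fderiv ℂ f (q + t • v) v) t := by
  have hline : HasDerivAt (fun s : ℂ => q + s • v) v t := by
    simpa using ((hasDerivAt_id t).smul_const v).const_add q
  exact hf.hasFDerivAt.comp_hasDerivAt t hline

/-- The restrictions `t ↦ f (q + t • v)` converge locally uniformly as `q → p`, so by Weierstrass'
theorem their derivatives at `0`, which are `df_q v`, converge as well. -/
theorem continuousAt_fderiv_apply_of_differentiableOn [CompleteSpace G]
    (hf : DifferentiableOn ℂ f Ω) (hΩ : IsOpen Ω) {p : E} (hp : p ∈ Ω) (v : E) :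
    ContinuousAt (fun q => fderiv ℂ f q v) p := by
  let φ : E → ℂ → G := fun q t => f (q + t • v)
  have hline : Continuous fun x : E × ℂ => x.1 + x.2 • v := by fun_prop
  obtain ⟨u, U, hu, hU, hpu, h0U, huU⟩ :=
    isOpen_prod_iff.1 (hΩ.preimage hline) p 0 (by simpa using hp)
  have hdiffAt : ∀ q ∈ u, ∀ t ∈ U, HasDerivAt (φ q) (fderiv ℂ f (q + t • v) v) t :=
    fun q hq t ht => hasDerivAt_comp_add_smul (hf.differentiableAt (hΩ.mem_nhds (huU (mk_mem_prod hq ht))))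
  have hderiv_eq : ∀ q ∈ u, deriv (φ q) 0 = fderiv ℂ f q v := fun q hq => by
    simpa using (hdiffAt q hq 0 h0U).deriv
  have hconv : TendstoLocallyUniformlyOn φ (φ p) (𝓝 p) U :=
    (hf.continuousOn.comp hline.continuousOn huU).tendstoLocallyUniformlyOn (hu.mem_nhds hpu) hU
  have hdiff : ∀ᶠ q in 𝓝 p, DifferentiableOn ℂ (φ q) U :=
    eventually_of_mem (hu.mem_nhds hpu) fun q hq t ht =>
      (hdiffAt q hq t ht).differentiableAt.differentiableWithinAt
  have hlim := (hconv.deriv hdiff hU).tendsto_at h0U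
  rw [ContinuousAt, ← hderiv_eq p hpu]
  exact hlim.congr' (eventually_of_mem (hu.mem_nhds hpu) hderiv_eq)

end ComplexLines

theorem tendsto_zero_of_sq_norm_le {α E : Type*} [SeminormedAddCommGroup E] {l : Filter α}
    {f : α → E} {a : α → ℝ} (ha : Tendsto a l (𝓝 0)) (h : ∀ᶠ x in l, ‖f x‖ ^ 2 ≤ a x) :
    Tendsto f l (𝓝 0) := by
  have hsq : Tendsto (fun x => ‖f x‖ ^ 2) l (𝓝 0) :=
    squeeze_zero' (Eventually.of_forall fun _ => sq_nonneg _) h ha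
  rw [tendsto_zero_iff_norm_tendsto_zero]
  simpa using hsq.sqrt

theorem sq_norm_le_of_bergman_le {N : ℕ} {z w : EuclideanSpace ℂ (Fin N)} {C : ℝ} (hz : ‖z‖ < 1)
    (hC : bergman z w ≤ C) : ‖w‖ ^ 2 ≤ C * (1 - ‖z‖ ^ 2) := by
  have hA : 0 < 1 - ‖z‖ ^ 2 := by nlinarith [norm_nonneg z]
  have hsplit : bergman z w * (1 - ‖z‖ ^ 2)
      = ‖w‖ ^ 2 + ‖∑ j, w j * (starRingEnd ℂ) (z j)‖ ^ 2 / (1 - ‖z‖ ^ 2) := by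
    unfold bergman; field_simp
  have hcross := div_nonneg (sq_nonneg ‖∑ j, w j * (starRingEnd ℂ) (z j)‖) hA.le
  nlinarith

theorem derivative_vanishes_at_boundary_point_general {n N : ℕ}
    (Ω W : Set (EuclideanSpace ℂ (Fin n))) (hΩopen : IsOpen Ω)
    (F : EuclideanSpace ℂ (Fin n) → EuclideanSpace ℂ (Fin N))
    (hF : DifferentiableOn ℂ F Ω)
    (hlt : ∀ q ∈ W, ‖F q‖ < 1)
    (p : EuclideanSpace ℂ (Fin n)) (hp : p ∈ Ω ∩ frontier W) (hFp : ‖F p‖ = 1)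
    (v : EuclideanSpace ℂ (Fin n))
    (hbd : ∃ C : ℝ, ∀ᶠ q in nhdsWithin p W, bergman (F q) (fderiv ℂ F q v) ≤ C) :
    fderiv ℂ F p v = 0 := by
  obtain ⟨C, hC⟩ := hbd
  have : (𝓝[W] p).NeBot := mem_closure_iff_nhdsWithin_neBot.1 hp.2.1
  have hFcont : ContinuousAt F p := (hF.differentiableAt (hΩopen.mem_nhds hp.1)).continuousAt
  have hdefect : Tendsto (fun q => C * (1 - ‖F q‖ ^ 2)) (𝓝[W] p) (𝓝 0) := by
    have h := ((hFcont.norm.tendsto.pow 2).const_sub 1).const_mul C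
    simpa [hFp] using h.mono_left nhdsWithin_le_nhds
  have hsmall : ∀ᶠ q in 𝓝[W] p, ‖fderiv ℂ F q v‖ ^ 2 ≤ C * (1 - ‖F q‖ ^ 2) := by
    filter_upwards [hC, self_mem_nhdsWithin] with q hq hqW
    exact sq_norm_le_of_bergman_le (hlt q hqW) hq
  have hcont := continuousAt_fderiv_apply_of_differentiableOn hF hΩopen hp.1 v
  exact tendsto_nhds_unique (hcont.tendsto.mono_left nhdsWithin_le_nhds)
    (tendsto_zero_of_sq_norm_le hdefect hsmall)

/-- if `F` is holomorphic on an open `Ω`, `‖F‖ < 1` on an open `W ⊆ Ω`,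
`p ∈ Ω ∩ ∂W` with `‖F(p)‖ = 1`, and the pullback Bergman metric
`g_N(F(q))(dF|_q v, dF|_q v)` stays bounded as `q → p` within `W`,
then `dF|_p v = 0`. -/
theorem derivative_vanishes_at_boundary_point {n N : ℕ}
    (Ω W : Set (EuclideanSpace ℂ (Fin n))) (hΩopen : IsOpen Ω) (hWopen : IsOpen W)
    (hWΩ : W ⊆ Ω)
    (F : EuclideanSpace ℂ (Fin n) → EuclideanSpace ℂ (Fin N))
    (hF : DifferentiableOn ℂ F Ω)
    (hlt : ∀ q ∈ W, ‖F q‖ < 1)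
    (p : EuclideanSpace ℂ (Fin n)) (hp : p ∈ Ω ∩ frontier W) (hFp : ‖F p‖ = 1)
    (v : EuclideanSpace ℂ (Fin n))
    (hbd : ∃ C : ℝ, ∀ᶠ q in nhdsWithin p W, bergman (F q) (fderiv ℂ F q v) ≤ C) :
    fderiv ℂ F p v = 0 :=
  derivative_vanishes_at_boundary_point_general Ω W hΩopen F hF hlt p hp hFp v hbd
end

section
/- Let n ≥ 2, let Ω ⊆ ℂ^n be open, and let S ⊆ Ω be a connected smooth real-analytic real hypersurface. Let F : Ω → ℂ^N be holomorphic such that ‖F(p)‖ = 1 for every p ∈ S and the full (real) differential of the function z ↦ ‖F(z)‖² vanishes at every point of S. Then there exists a point p ∈ S at which the complex derivative dF|_p : ℂ^n → ℂ^N is not injective; in particular, F cannot be a holomorphic immersion on any neighborhood of S. -/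
/-- `S` is a smooth real-analytic real hypersurface in `Ω`: a real-analytic submanifold of
real codimension 1, given locally as the regular zero set of a real-analytic defining
function. -/
def IsRealAnalyticHypersurface {n : ℕ} (Ω S : Set (EuclideanSpace ℂ (Fin n))) : Prop :=
  S ⊆ Ω ∧ ∀ p ∈ S, ∃ O : Set (EuclideanSpace ℂ (Fin n)), IsOpen O ∧ p ∈ O ∧ O ⊆ Ω ∧
    ∃ ρ : EuclideanSpace ℂ (Fin n) → ℝ, AnalyticOnNhd ℝ ρ O ∧
      (∀ q ∈ O, fderiv ℝ ρ q ≠ 0) ∧ S ∩ O = {q ∈ O | ρ q = 0}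

/-!
Write `φ = ‖F‖²`, so that `φ = 1` and `dφ = 0` on `S`. At a point `p ∈ S` choose `u ≠ 0` with
both `u` and `I • u` tangent to `S` (possible since `n ≥ 2`). Along the holomorphic disc
`ζ ↦ F (p + ζ • u)` the second-order terms of `F` cancel between the real and the imaginary
axis, so `φ (p + t • u) + φ (p + t • I • u) = 2 + 2 ‖dF u‖² t² + o(t²)`. On the other hand both
lines stay within `O(t²)` of `S` (intermediate value theorem along a normal of the defining
function), and `φ (q + h) ≤ 1 + o(‖h‖)` for `q ∈ S`. Where this last estimate is uniform in the
points `q ∈ S` near `p`, it gives `φ (p + t • v) ≤ 1 + o(t²)` in both tangent directions `v`,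
hence `dF u = 0`. Uniformity is not automatic, as `φ` is only known to be differentiable, but
Baire's theorem on a compact piece of `S` provides points where it holds.
-/

open Filter Metric Asymptotics Topology

theorem nonpos_of_isLittleO_sub_mul_sq {f : ℝ → ℝ} {c : ℝ}
    (hf : (fun t => f t - c * t ^ 2) =o[𝓝 0] fun t => t ^ 2)
    (hle : ∀ ε > 0, ∀ᶠ t in 𝓝 0, f t ≤ ε * t ^ 2) : c ≤ 0 := by
  by_contra! hc
  have hev := ((hf.def (half_pos hc)).and (hle _ (half_pos (half_pos hc)))).filter_mono
    (nhdsWithin_le_nhds (s := {0}ᶜ))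
  obtain ⟨t, ⟨hlow, hup⟩, ht⟩ := (hev.and self_mem_nhdsWithin).exists
  have ht2 : 0 < c * t ^ 2 := mul_pos hc (pow_pos (abs_pos.2 ht) 2 |>.trans_eq (sq_abs t))
  rw [Real.norm_eq_abs, Real.norm_eq_abs, abs_of_nonneg (sq_nonneg t)] at hlow
  linarith [(abs_le.1 hlow).1]

theorem eq_add_sub_smul_deriv_add_sub_smul_dslope_dslope {𝕜 E : Type*}
    [NontriviallyNormedField 𝕜] [NormedAddCommGroup E] [NormedSpace 𝕜 E] (g : 𝕜 → E) (a z : 𝕜) :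
    g z = g a + (z - a) • (deriv g a + (z - a) • dslope (dslope g a) a z) := by
  rw [← dslope_same, sub_smul_dslope, add_sub_cancel, sub_smul_dslope, add_sub_cancel]

theorem dense_setOf_forall_exists_mem_nhds {X : Type*} [TopologicalSpace X] [BaireSpace X]
    {A : ℕ → ℕ → Set X} (hA : ∀ m k, IsClosed (A m k)) (hcover : ∀ m x, ∃ k, x ∈ A m k) :
    Dense {x | ∀ m, ∃ k, A m k ∈ 𝓝 x} := by
  have h := dense_iInter_of_isOpen (fun m => isOpen_iUnion fun k => isOpen_interior (s := A m k))
    fun m => dense_iUnion_interior_of_closed (hA m) (Set.iUnion_eq_univ_iff.2 (hcover m))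
  refine h.mono fun x hx m => ?_
  obtain ⟨k, hk⟩ := Set.mem_iUnion.1 (Set.mem_iInter.1 hx m)
  exact ⟨k, mem_interior_iff_mem_nhds.1 hk⟩

section Taylor

variable {E F : Type*} [NormedAddCommGroup E] [NormedSpace ℝ E] [NormedAddCommGroup F]
  [NormedSpace ℝ F]

theorem Convex.norm_sub_sub_le_of_lipschitzOnWith {f : E → F} {f' : E → E →L[ℝ] F} {s : Set E}
    {K : NNReal} (hs : Convex ℝ s) (hf : ∀ x ∈ s, HasFDerivWithinAt f (f' x) s x)
    (hf' : LipschitzOnWith K f' s) {x y : E} (hx : x ∈ s) (hy : y ∈ s) :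
    ‖f y - f x - f' x (y - x)‖ ≤ K * ‖y - x‖ ^ 2 := by
  set s' := s ∩ closedBall x ‖y - x‖
  have hderiv : ∀ z ∈ s', HasFDerivWithinAt (fun z => f z - f' x z) (f' z - f' x) s' z :=
    fun z hz => ((hf z hz.1).mono Set.inter_subset_left).sub (f' x).hasFDerivWithinAt
  have hbound : ∀ z ∈ s', ‖f' z - f' x‖ ≤ K * ‖y - x‖ := fun z hz => by
    calc ‖f' z - f' x‖ ≤ K * ‖z - x‖ := by
          simpa [dist_eq_norm] using hf'.dist_le_mul z hz.1 x hx
      _ ≤ K * ‖y - x‖ := by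
          gcongr; simpa [dist_eq_norm] using hz.2
  have := (hs.inter (convex_closedBall x _)).norm_image_sub_le_of_norm_hasFDerivWithin_le
    hderiv hbound ⟨hx, mem_closedBall_self (norm_nonneg _)⟩ ⟨hy, by simp [dist_eq_norm]⟩
  calc ‖f y - f x - f' x (y - x)‖ = ‖(f y - f' x y) - (f x - f' x x)‖ := by
        rw [map_sub]; abel_nf
    _ ≤ K * ‖y - x‖ * ‖y - x‖ := this
    _ = K * ‖y - x‖ ^ 2 := by ring

theorem ContDiffAt.exists_norm_sub_sub_fderiv_le {f : E → F} {p : E} (hf : ContDiffAt ℝ 2 f p) :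
    ∃ K ≥ (0 : ℝ), ∃ r > 0, ∀ x ∈ ball p r, ∀ y ∈ ball p r,
      ‖f y - f x - fderiv ℝ f x (y - x)‖ ≤ K * ‖y - x‖ ^ 2 := by
  obtain ⟨K, t, ht, hK⟩ := (hf.fderiv_right (m := 1) le_rfl).exists_lipschitzOnWith
  have hdiff : ∀ᶠ x in 𝓝 p, DifferentiableAt ℝ f x :=
    (hf.eventually (by simp)).mono fun x hx => hx.differentiableAt (by norm_num)
  obtain ⟨r, hr, hball⟩ := Metric.mem_nhds_iff.1 (inter_mem ht hdiff)
  refine ⟨K, K.2, r, hr, fun x hx y hy => ?_⟩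
  exact (convex_ball p r).norm_sub_sub_le_of_lipschitzOnWith
    (fun z hz => (hball hz).2.hasFDerivAt.hasFDerivWithinAt)
    (hK.mono fun z hz => (hball hz).1) hx hy

end Taylor

def UniformlyLeAddLittleO {E : Type*} [NormedAddCommGroup E] (φ : E → ℝ) (c : ℝ) (T : Set E)
    (p : E) : Prop :=
  ∀ ε > 0, ∃ δ > 0, ∀ q ∈ T, ‖q - p‖ < δ → ∀ h : E, ‖h‖ < δ → φ (q + h) ≤ c + ε * ‖h‖

theorem UniformlyLeAddLittleO.mono {E : Type*} [NormedAddCommGroup E] {φ : E → ℝ} {c : ℝ}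
    {T T' : Set E} {p : E} (hφ : UniformlyLeAddLittleO φ c T p) (hT : ∀ᶠ q in 𝓝 p, q ∈ T' → q ∈ T) :
    UniformlyLeAddLittleO φ c T' p := by
  intro ε hε
  obtain ⟨δ, hδ, hφδ⟩ := hφ ε hε
  obtain ⟨η, hη, hηT⟩ := Metric.eventually_nhds_iff.1 hT
  refine ⟨min δ η, lt_min hδ hη, fun q hq hqp h hh => ?_⟩
  exact hφδ q (hηT (by rw [dist_eq_norm]; exact hqp.trans_le (min_le_right _ _)) hq)
    (hqp.trans_le (min_le_left _ _)) h (hh.trans_le (min_le_left _ _))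

section Uniform

variable {E : Type*} [NormedAddCommGroup E] [NormedSpace ℝ E]

theorem HasFDerivAt.eventually_le_add_mul_norm {φ : E → ℝ} {q : E}
    (hφ : HasFDerivAt φ (0 : E →L[ℝ] ℝ) q) {ε : ℝ} (hε : 0 < ε) :
    ∀ᶠ h in 𝓝 0, φ (q + h) ≤ φ q + ε * ‖h‖ :=
  ((hasFDerivAt_iff_isLittleO_nhds_zero.1 hφ).def hε).mono fun h hh => by
    simp only [zero_apply, sub_zero, Real.norm_eq_abs] at hh
    linarith [le_abs_self (φ (q + h) - φ q)]

theorem IsCompact.exists_mem_uniformlyLeAddLittleO {K U : Set E} (hK : IsCompact K)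
    (hU : IsOpen U) (hKU : (K ∩ U).Nonempty) {φ : E → ℝ} {c r : ℝ} (hr : 0 < r)
    (hcont : ∀ q ∈ K, ∀ h : E, ‖h‖ ≤ r → ContinuousAt φ (q + h))
    (hφ : ∀ q ∈ K, φ q = c ∧ HasFDerivAt φ (0 : E →L[ℝ] ℝ) q) :
    ∃ p ∈ K ∩ U, UniformlyLeAddLittleO φ c K p := by
  have := isCompact_iff_compactSpace.1 hK
  set δ : ℕ → ℝ := fun k => min r (1 / (k + 1))
  set A : ℕ → ℕ → Set K := fun m k =>
    {q | ∀ h : E, ‖h‖ ≤ δ k → φ (q + h) ≤ c + 1 / (m + 1) * ‖h‖}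
  have hA : ∀ m k, IsClosed (A m k) := fun m k => by
    simp only [A, Set.ofPred_forall]
    refine isClosed_iInter fun h => isClosed_iInter fun hh => isClosed_le ?_ continuous_const
    exact continuous_iff_continuousAt.2 fun q =>
      (hcont q q.2 h (hh.trans (min_le_left _ _))).comp (f := fun q : K => (q : E) + h)
        (by fun_prop)
  have hcover : ∀ m (q : K), ∃ k, q ∈ A m k := fun m q => by
    obtain ⟨η, hη, hball⟩ := Metric.eventually_nhds_iff.1 ((hφ q q.2).1 ▸
      (hφ q q.2).2.eventually_le_add_mul_norm (Nat.one_div_pos_of_nat (n := m)))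
    obtain ⟨k, hk⟩ := exists_nat_one_div_lt hη
    exact ⟨k, fun h hh => hball (by simpa using hh.trans_lt ((min_le_right _ _).trans_lt hk))⟩
  obtain ⟨⟨p, hpK⟩, hp, hpU⟩ := (dense_setOf_forall_exists_mem_nhds hA hcover).exists_mem_open
    (hU.preimage continuous_subtype_val) (by obtain ⟨p, hpK, hpU⟩ := hKU; exact ⟨⟨p, hpK⟩, hpU⟩)
  refine ⟨p, ⟨hpK, hpU⟩, fun ε hε => ?_⟩
  obtain ⟨m, hm⟩ := exists_nat_one_div_lt hε
  obtain ⟨k, hk⟩ := hp m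
  obtain ⟨η, hη, hball⟩ := Metric.mem_nhds_iff.1 hk
  refine ⟨min η (δ k), lt_min hη (lt_min hr Nat.one_div_pos_of_nat), fun q hq hqp h hh => ?_⟩
  have hqA : (⟨q, hq⟩ : K) ∈ A m k :=
    hball (by simpa [Subtype.dist_eq, dist_eq_norm] using hqp.trans_le (min_le_left _ _))
  calc φ (q + h) ≤ c + 1 / (m + 1) * ‖h‖ := hqA h (hh.le.trans (min_le_right _ _))
    _ ≤ c + ε * ‖h‖ := by gcongr

theorem exists_mem_uniformlyLeAddLittleO_of_inter_eq [ProperSpace E] {S O : Set E}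
    {ρ φ : E → ℝ} {c : ℝ} (hO : IsOpen O) (hρ : ContinuousOn ρ O) (hφ : ContinuousOn φ O)
    (hSO : S ∩ O = {q ∈ O | ρ q = 0})
    (hflat : ∀ q ∈ S ∩ O, φ q = c ∧ HasFDerivAt φ (0 : E →L[ℝ] ℝ) q) (hne : (S ∩ O).Nonempty) :
    ∃ p ∈ S ∩ O, UniformlyLeAddLittleO φ c S p := by
  obtain ⟨p₀, hp₀S, hp₀O⟩ := hne
  obtain ⟨r, hr, hrO⟩ := Metric.isOpen_iff.1 hO p₀ hp₀O
  have hKO : closedBall p₀ (r / 2) ⊆ O := (closedBall_subset_ball (by linarith)).trans hrO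
  have hK : IsCompact (S ∩ closedBall p₀ (r / 2)) := by
    have : S ∩ closedBall p₀ (r / 2) = closedBall p₀ (r / 2) ∩ ρ ⁻¹' {0} := by
      ext q
      constructor
      · rintro ⟨hq, hqb⟩
        exact ⟨hqb, (hSO.subset ⟨hq, hKO hqb⟩).2⟩
      · rintro ⟨hqb, hρq⟩
        exact ⟨(hSO.symm.subset ⟨hKO hqb, hρq⟩).1, hqb⟩
    rw [this]
    exact (isCompact_closedBall p₀ _).of_isClosed_subset
      ((hρ.mono hKO).preimage_isClosed_of_isClosed isClosed_closedBall isClosed_singleton)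
      Set.inter_subset_left
  have hcont (q) (hq : q ∈ S ∩ closedBall p₀ (r / 2)) (h : E) (hh : ‖h‖ ≤ r / 4) :
      ContinuousAt φ (q + h) := by
    refine hφ.continuousAt (hO.mem_nhds (hrO ?_))
    rw [mem_ball, dist_eq_norm, add_sub_right_comm]
    linarith [norm_add_le (q - p₀) h, mem_closedBall_iff_norm.1 hq.2]
  obtain ⟨p, ⟨⟨hpS, hpb⟩, hpU⟩, hunif⟩ := hK.exists_mem_uniformlyLeAddLittleO isOpen_ball
    ⟨p₀, ⟨hp₀S, mem_closedBall_self (half_pos hr).le⟩, mem_ball_self (half_pos hr)⟩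
    (by positivity) hcont fun q hq => hflat q ⟨hq.1, hKO hq.2⟩
  exact ⟨p, ⟨hpS, hKO hpb⟩, hunif.mono <| eventually_of_mem (isOpen_ball.mem_nhds hpU)
    fun q hqb hqS => ⟨hqS, ball_subset_closedBall hqb⟩⟩

end Uniform

section Tangent

variable {E : Type*} [NormedAddCommGroup E] [NormedSpace ℝ E]

def IsTangentToOrderTwo (T : Set E) (p v : E) : Prop :=
  ∃ C : ℝ, ∀ᶠ t in 𝓝 (0 : ℝ), ∃ q ∈ T, ‖p + t • v - q‖ ≤ C * t ^ 2

theorem IsTangentToOrderTwo.mono {T T' : Set E} {p v : E} (hv : IsTangentToOrderTwo T p v)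
    (hT : T ⊆ T') : IsTangentToOrderTwo T' p v :=
  let ⟨C, hC⟩ := hv
  ⟨C, hC.mono fun _ ⟨q, hq, hqt⟩ => ⟨q, hT hq, hqt⟩⟩

theorem exists_zero_on_normal_segment {ρ : E → ℝ} {ℓ : E →L[ℝ] ℝ} {p v e : E} {K r t : ℝ}
    (hK : 0 ≤ K) (hcont : ContinuousOn ρ (ball p r))
    (hρ : ∀ w ∈ ball (0 : E) r, |ρ (p + w) - ℓ w| ≤ K * ‖w‖ ^ 2)
    (hv : ℓ v = 0) (he : ℓ e = 1) (htr : |t| * (‖v‖ + 1) < r)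
    (hte : (K * (‖v‖ + 1) ^ 2 + 1) * |t| * ‖e‖ ≤ 1) :
    ∃ s, |s| ≤ (K * (‖v‖ + 1) ^ 2 + 1) * t ^ 2 ∧ p + t • v + s • e ∈ ball p r ∧
      ρ (p + t • v + s • e) = 0 := by
  set M := K * (‖v‖ + 1) ^ 2 + 1
  have hnorm : ∀ s, |s| ≤ M * t ^ 2 → ‖t • v + s • e‖ ≤ |t| * (‖v‖ + 1) := fun s hs => by
    calc ‖t • v + s • e‖ ≤ |t| * ‖v‖ + |s| * ‖e‖ := by
          simpa [norm_smul] using norm_add_le (t • v) (s • e)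
      _ ≤ |t| * ‖v‖ + M * t ^ 2 * ‖e‖ := by gcongr
      _ = |t| * ‖v‖ + (M * |t| * ‖e‖) * |t| := by rw [← sq_abs t]; ring
      _ ≤ |t| * (‖v‖ + 1) := by nlinarith [abs_nonneg t]
  have hmem : ∀ s, |s| ≤ M * t ^ 2 → p + t • v + s • e ∈ ball p r := fun s hs => by
    rw [mem_ball, dist_eq_norm, add_assoc, add_sub_cancel_left]
    exact (hnorm s hs).trans_lt htr
  have hclose : ∀ s, |s| ≤ M * t ^ 2 → |ρ (p + t • v + s • e) - s| ≤ (M - 1) * t ^ 2 :=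
    fun s hs => by
    have hw : t • v + s • e ∈ ball (0 : E) r := by
      rw [mem_ball, dist_zero_right]; exact (hnorm s hs).trans_lt htr
    have hℓ : ℓ (t • v + s • e) = s := by simp [hv, he]
    calc |ρ (p + t • v + s • e) - s| = |ρ (p + (t • v + s • e)) - ℓ (t • v + s • e)| := by
          rw [hℓ, add_assoc]
      _ ≤ K * ‖t • v + s • e‖ ^ 2 := hρ _ hw
      _ ≤ K * (|t| * (‖v‖ + 1)) ^ 2 := by gcongr; exact hnorm s hs
      _ = (M - 1) * t ^ 2 := by rw [mul_pow, sq_abs]; ring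
  have hMt : 0 ≤ M * t ^ 2 := by positivity
  -- at `s = ± M t²` the linear term `s` beats the error `(M - 1) t²`, so `ρ` changes sign
  have hup := abs_le.1 (hclose (M * t ^ 2) (abs_of_nonneg hMt).le)
  have hdown := abs_le.1 (hclose (-(M * t ^ 2)) (by rw [abs_neg, abs_of_nonneg hMt]))
  have hcont' :
      ContinuousOn (fun s => ρ (p + t • v + s • e)) (Set.Icc (-(M * t ^ 2)) (M * t ^ 2)) :=
    hcont.comp (by fun_prop) fun s hs => hmem s (abs_le.2 hs)
  obtain ⟨s, hs, hs0⟩ := intermediate_value_Icc (neg_le_self hMt) hcont'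
    (show (0 : ℝ) ∈ Set.Icc _ _ from ⟨by nlinarith [hdown.2], by nlinarith [hup.1]⟩)
  exact ⟨s, abs_le.2 hs, hmem s (abs_le.2 hs), hs0⟩

theorem ContDiffAt.isTangentToOrderTwo_setOf_eq_zero {ρ : E → ℝ} {p v : E} {U : Set E}
    (hρ : ContDiffAt ℝ 2 ρ p) (hρp : ρ p = 0) (hne : fderiv ℝ ρ p ≠ 0)
    (hv : fderiv ℝ ρ p v = 0) (hU : U ∈ 𝓝 p) :
    IsTangentToOrderTwo {q ∈ U | ρ q = 0} p v := by
  obtain ⟨e₀, he₀⟩ := DFunLike.ne_iff.1 hne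
  set e := (fderiv ℝ ρ p e₀)⁻¹ • e₀
  have he : fderiv ℝ ρ p e = 1 := by simpa [e] using inv_mul_cancel₀ he₀
  obtain ⟨K, hK, r₁, hr₁, htaylor⟩ := hρ.exists_norm_sub_sub_fderiv_le
  have hcont : ∀ᶠ x in 𝓝 p, ContinuousAt ρ x :=
    (hρ.eventually (by simp)).mono fun x hx => hx.continuousAt
  obtain ⟨r₂, hr₂, hball⟩ := Metric.mem_nhds_iff.1 (inter_mem hU hcont)
  set r := min r₁ r₂
  set M := K * (‖v‖ + 1) ^ 2 + 1
  have hsmall : ∀ᶠ t in 𝓝 (0 : ℝ), |t| * (‖v‖ + 1) < r ∧ M * |t| * ‖e‖ < 1 := by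
    have hlim : ∀ c : ℝ, Tendsto (fun t : ℝ => c * |t|) (𝓝 0) (𝓝 0) := fun c =>
      (by fun_prop : Continuous fun t : ℝ => c * |t|).tendsto' 0 0 (by simp)
    refine ((hlim (‖v‖ + 1)).eventually (gt_mem_nhds (lt_min hr₁ hr₂))).and
      ((hlim (M * ‖e‖)).eventually (gt_mem_nhds one_pos)) |>.mono fun t ht => ⟨?_, ?_⟩
    · linarith [ht.1]
    · linarith [ht.2]
  refine ⟨M * ‖e‖, hsmall.mono fun t ⟨htr, hte⟩ => ?_⟩
  have hrr₁ : ball p r ⊆ ball p r₁ := ball_subset_ball (min_le_left _ _)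
  have hrr₂ : ball p r ⊆ ball p r₂ := ball_subset_ball (min_le_right _ _)
  obtain ⟨s, hs, hsr, hs0⟩ := exists_zero_on_normal_segment (ρ := ρ) (r := r) hK
    (fun x hx => (hball (hrr₂ hx)).2.continuousWithinAt)
    (fun w hw => by
      simpa [hρp] using htaylor p (mem_ball_self hr₁) (p + w) (hrr₁ (by simpa using hw)))
    hv he htr hte.le
  refine ⟨_, ⟨(hball (hrr₂ hsr)).1, hs0⟩, ?_⟩
  calc ‖p + t • v - (p + t • v + s • e)‖ = |s| * ‖e‖ := by simp [norm_smul]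
    _ ≤ M * t ^ 2 * ‖e‖ := by gcongr
    _ = M * ‖e‖ * t ^ 2 := by ring

theorem IsTangentToOrderTwo.eventually_le_add_mul_sq {φ : E → ℝ} {T : Set E} {p v : E} {c : ℝ}
    (hv : IsTangentToOrderTwo T p v)
    (hφ : UniformlyLeAddLittleO φ c T p) :
    ∀ ε > 0, ∀ᶠ t : ℝ in 𝓝 0, φ (p + t • v) ≤ c + ε * t ^ 2 := by
  intro ε hε
  obtain ⟨C, hC⟩ := hv
  obtain ⟨δ, hδ, hφδ⟩ := hφ (ε / (|C| + 1)) (by positivity)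
  have hsmall : ∀ᶠ t : ℝ in 𝓝 0, |t| * ‖v‖ + |C| * t ^ 2 < δ :=
    (by fun_prop : Continuous fun t : ℝ => |t| * ‖v‖ + |C| * t ^ 2).tendsto' 0 0 (by simp)
      |>.eventually (gt_mem_nhds hδ)
  refine (hC.and hsmall).mono fun t ⟨⟨q, hqT, hq⟩, ht⟩ => ?_
  have hq' : ‖p + t • v - q‖ ≤ |C| * t ^ 2 := hq.trans (by gcongr; exact le_abs_self C)
  have htv : ‖t • v‖ = |t| * ‖v‖ := by rw [norm_smul, Real.norm_eq_abs]
  have hqp : ‖q - p‖ < δ :=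
    calc ‖q - p‖ = ‖t • v - (p + t • v - q)‖ := by congr 1; abel
      _ ≤ ‖t • v‖ + ‖p + t • v - q‖ := norm_sub_le _ _
      _ < δ := by rw [htv]; linarith
  have hbound := hφδ q hqT hqp (p + t • v - q) (by nlinarith [abs_nonneg t, norm_nonneg v])
  rw [add_sub_cancel] at hbound
  calc φ (p + t • v) ≤ c + ε / (|C| + 1) * (|C| * t ^ 2) := by
        refine hbound.trans ?_; gcongr
    _ ≤ c + ε * t ^ 2 := by
        have : ε / (|C| + 1) * |C| ≤ ε := by
          rw [div_mul_eq_mul_div, div_le_iff₀ (by positivity)]; nlinarith [abs_nonneg C]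
        nlinarith [sq_nonneg t]

end Tangent

section InnerProduct

variable {E : Type*} [NormedAddCommGroup E] [InnerProductSpace ℂ E]

theorem norm_add_smul_add_smul_sq (x a b : E) (t : ℝ) :
    ‖x + t • (a + t • b)‖ ^ 2 = ‖x‖ ^ 2 + 2 * t * (inner ℂ x a).re
      + t ^ 2 * (2 * (inner ℂ x b).re + ‖a + t • b‖ ^ 2) := by
  rw [@norm_add_sq ℂ, ← Complex.coe_smul, ← Complex.coe_smul, inner_smul_right, inner_add_right,
    inner_smul_right, norm_smul, Complex.norm_real, Real.norm_eq_abs, mul_pow, sq_abs]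
  simp only [RCLike.re_to_complex, Complex.re_ofReal_mul, Complex.add_re]
  ring

theorem I_mul_smul_add_I_mul_smul (a k : E) (t : ℝ) :
    (Complex.I * t) • (a + (Complex.I * t) • k) = t • (Complex.I • a + t • (-k)) := by
  rw [← Complex.coe_smul, ← Complex.coe_smul, smul_add, smul_add, smul_smul, smul_smul,
    smul_smul, smul_neg, ← neg_smul]
  congr 1 <;> congr 1 <;> ring_nf; simp

theorem isLittleO_norm_sq_add_norm_sq_I_mul [CompleteSpace E] {g : ℂ → E}
    (hg : ∀ᶠ z in 𝓝 0, DifferentiableAt ℂ g z) (h₁ : (inner ℂ (g 0) (deriv g 0)).re = 0)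
    (hI : (inner ℂ (g 0) (Complex.I • deriv g 0)).re = 0) :
    (fun t : ℝ => ‖g t‖ ^ 2 + ‖g (Complex.I * t)‖ ^ 2 - 2 * ‖g 0‖ ^ 2
      - 2 * ‖deriv g 0‖ ^ 2 * t ^ 2) =o[𝓝 0] fun t => t ^ 2 := by
  set a := deriv g 0
  have hk : ContinuousAt (dslope (dslope g 0) 0) 0 := by
    refine continuousAt_dslope_same.2 (DifferentiableOn.differentiableAt ?_ hg)
    exact (Complex.differentiableOn_dslope hg).2 fun z hz => hz.differentiableWithinAt
  generalize hk_def : dslope (dslope g 0) 0 = k at hk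
  have hre (t : ℝ) : g t = g 0 + t • (a + t • k t) := by
    rw [eq_add_sub_smul_deriv_add_sub_smul_dslope_dslope g 0, sub_zero, hk_def, Complex.coe_smul,
      ← Complex.coe_smul t (k t)]
  have him (t : ℝ) : g (Complex.I * t) = g 0 + t • (Complex.I • a + t • -k (Complex.I * t)) := by
    rw [eq_add_sub_smul_deriv_add_sub_smul_dslope_dslope g 0, sub_zero, hk_def,
      I_mul_smul_add_I_mul_smul]
  have hk₁ : ContinuousAt (fun t : ℝ => k t) 0 :=
    hk.comp_of_eq Complex.continuous_ofReal.continuousAt (by simp)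
  have hk₂ : ContinuousAt (fun t : ℝ => k (Complex.I * t)) 0 :=
    hk.comp_of_eq (by fun_prop) (by simp)
  set R : ℝ → ℝ := fun t => 2 * (inner ℂ (g 0) (k t)).re + ‖a + t • k t‖ ^ 2
    + (2 * (inner ℂ (g 0) (-k (Complex.I * t))).re + ‖Complex.I • a + t • -k (Complex.I * t)‖ ^ 2)
  have hR : ContinuousAt R 0 := by
    have hΦ (κ₁ κ₂ : ℝ → E) (h₁ : ContinuousAt κ₁ 0) (h₂ : ContinuousAt κ₂ 0) :
        ContinuousAt (fun t => 2 * (inner ℂ (g 0) (κ₁ t)).re + ‖a + t • κ₁ t‖ ^ 2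
          + (2 * (inner ℂ (g 0) (-κ₂ t)).re + ‖Complex.I • a + t • -κ₂ t‖ ^ 2)) 0 := by
      fun_prop
    exact hΦ _ _ hk₁ hk₂
  -- the second-order terms `± k 0` cancel because `(I t)² = -t²`
  have hR0 : R 0 = 2 * ‖a‖ ^ 2 := by
    simp only [R, Complex.ofReal_zero, mul_zero, zero_smul, add_zero, inner_neg_right,
      Complex.neg_re, norm_smul, Complex.norm_I, one_mul]
    ring
  have hexp (t : ℝ) : ‖g t‖ ^ 2 + ‖g (Complex.I * t)‖ ^ 2 - 2 * ‖g 0‖ ^ 2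
      - 2 * ‖a‖ ^ 2 * t ^ 2 = (R t - R 0) * t ^ 2 := by
    rw [hre, him, norm_add_smul_add_smul_sq, norm_add_smul_add_smul_sq, h₁, hI, hR0]
    ring
  simp_rw [hexp]
  have hR' : Tendsto (fun t => R t - R 0) (𝓝 0) (𝓝 0) := by
    simpa using (hR.tendsto.sub_const (R 0))
  simpa using (isLittleO_one_iff ℝ).2 hR' |>.mul_isBigO (isBigO_refl (fun t : ℝ => t ^ 2) _)

end InnerProduct

theorem exists_ne_zero_apply_eq_zero_apply_I_smul_eq_zero {E : Type*} [AddCommGroup E]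
    [Module ℂ E] [FiniteDimensional ℂ E] (hE : 2 ≤ Module.finrank ℂ E) (ℓ : Module.Dual ℝ E) :
    ∃ u : E, u ≠ 0 ∧ ℓ u = 0 ∧ ℓ (Complex.I • u) = 0 := by
  have hker : LinearMap.ker (ℓ.extendRCLike (𝕜 := ℂ)) ≠ ⊥ :=
    LinearMap.ker_ne_bot_of_finrank_lt (by rw [Module.finrank_self]; omega)
  obtain ⟨u, hu, hu0⟩ := Submodule.exists_mem_ne_zero_of_ne_bot hker
  have hre := ℓ.re_extendRCLike_apply (𝕜 := ℂ) u
  have him := ℓ.im_extendRCLike_apply (𝕜 := ℂ) u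
  rw [LinearMap.mem_ker.1 hu] at hre him
  refine ⟨u, hu0, ?_, ?_⟩
  · simpa using hre.symm
  · simpa using him.symm

section Holomorphic

variable {E E' : Type*} [NormedAddCommGroup E] [NormedSpace ℂ E] [NormedAddCommGroup E']
  [InnerProductSpace ℂ E']

theorem fderiv_norm_sq_apply_of_differentiableAt {F : E → E'} {p : E}
    (hF : DifferentiableAt ℂ F p) (w : E) :
    fderiv ℝ (fun z => ‖F z‖ ^ 2) p w = 2 * (inner ℂ (F p) (fderiv ℂ F p w)).re := by
  have hFℝ := (hF.restrictScalars ℝ).hasFDerivAt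
  have h := (Complex.reCLM.hasFDerivAt (x := inner ℂ (F p) (F p))).comp p (hFℝ.inner ℂ hFℝ)
  simp only [Function.comp_def, Complex.reCLM_apply, ← RCLike.re_to_complex,
    inner_self_eq_norm_sq] at h
  rw [h.fderiv, hF.fderiv_restrictScalars ℝ]
  simp only [ContinuousLinearMap.comp_apply, ContinuousLinearMap.prod_apply,
    fderivInnerCLM_apply, ContinuousLinearMap.coe_restrictScalars', Complex.reCLM_apply,
    Complex.add_re]
  rw [← RCLike.re_to_complex, ← RCLike.re_to_complex, inner_re_symm (F p)]
  ring

theorem isLittleO_norm_sq_add_norm_sq_I_smul [CompleteSpace E'] {F : E → E'} {p u : E}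
    (hF : ∀ᶠ z in 𝓝 p, DifferentiableAt ℂ F z)
    (hcrit : fderiv ℝ (fun z => ‖F z‖ ^ 2) p = 0) :
    (fun t : ℝ => ‖F (p + t • u)‖ ^ 2 + ‖F (p + t • Complex.I • u)‖ ^ 2 - 2 * ‖F p‖ ^ 2
      - 2 * ‖fderiv ℂ F p u‖ ^ 2 * t ^ 2) =o[𝓝 0] fun t => t ^ 2 := by
  set g : ℂ → E' := fun ζ => F (p + ζ • u)
  have hline : Tendsto (fun ζ : ℂ => p + ζ • u) (𝓝 0) (𝓝 p) := by
    simpa using ((continuous_id.smul continuous_const).const_add p).tendsto (0 : ℂ)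
  have hg : ∀ᶠ ζ in 𝓝 0, DifferentiableAt ℂ g ζ :=
    (hline.eventually hF).mono fun ζ hζ => hζ.comp ζ (by fun_prop)
  have hp := hF.self_of_nhds
  have hg' : deriv g 0 = fderiv ℂ F p u := by
    have hline' : HasDerivAt (fun ζ : ℂ => p + ζ • u) u 0 := by
      simpa using ((hasDerivAt_id (0 : ℂ)).smul_const u).const_add p
    exact (hp.hasFDerivAt.comp_hasDerivAt_of_eq 0 hline' (by simp)).deriv
  have horth (w : E) : (inner ℂ (F p) (fderiv ℂ F p w)).re = 0 := by
    have := fderiv_norm_sq_apply_of_differentiableAt hp w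
    rw [hcrit, zero_apply] at this
    linarith
  have hdisc := isLittleO_norm_sq_add_norm_sq_I_mul hg (by simpa [g, hg'] using horth u)
    (by simpa [g, hg', map_smul] using horth (Complex.I • u))
  simpa only [g, zero_smul, add_zero, Complex.coe_smul, hg', mul_comm Complex.I, mul_smul]
    using hdisc

theorem fderiv_apply_eq_zero_of_norm_sq_le [CompleteSpace E'] {F : E → E'} {p u : E}
    (hF : ∀ᶠ z in 𝓝 p, DifferentiableAt ℂ F z)
    (hcrit : fderiv ℝ (fun z => ‖F z‖ ^ 2) p = 0)
    (hu : ∀ ε > 0, ∀ᶠ t : ℝ in 𝓝 0, ‖F (p + t • u)‖ ^ 2 ≤ ‖F p‖ ^ 2 + ε * t ^ 2)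
    (hIu : ∀ ε > 0, ∀ᶠ t : ℝ in 𝓝 0,
      ‖F (p + t • Complex.I • u)‖ ^ 2 ≤ ‖F p‖ ^ 2 + ε * t ^ 2) :
    fderiv ℂ F p u = 0 := by
  have h := nonpos_of_isLittleO_sub_mul_sq
    (isLittleO_norm_sq_add_norm_sq_I_smul (u := u) hF hcrit) fun ε hε =>
      ((hu _ (half_pos hε)).and (hIu _ (half_pos hε))).mono fun t ⟨h₁, h₂⟩ => by linarith
  have : ‖fderiv ℂ F p u‖ ^ 2 = 0 := le_antisymm (by linarith) (sq_nonneg _)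
  simpa using this

theorem exists_ne_zero_fderiv_apply_eq_zero [FiniteDimensional ℂ E] [CompleteSpace E']
    (hE : 2 ≤ Module.finrank ℂ E) {F : E → E'} {ρ : E → ℝ} {S : Set E} {p : E}
    (hF : ∀ᶠ z in 𝓝 p, DifferentiableAt ℂ F z) (hcrit : fderiv ℝ (fun z => ‖F z‖ ^ 2) p = 0)
    (hρ : ContDiffAt ℝ 2 ρ p) (hρp : ρ p = 0) (hρ' : fderiv ℝ ρ p ≠ 0)
    (hS : ∀ᶠ q in 𝓝 p, ρ q = 0 → q ∈ S)
    (hunif : UniformlyLeAddLittleO (fun z => ‖F z‖ ^ 2) (‖F p‖ ^ 2) S p) :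
    ∃ u ≠ 0, fderiv ℂ F p u = 0 := by
  obtain ⟨u, hu0, hu, hIu⟩ :=
    exists_ne_zero_apply_eq_zero_apply_I_smul_eq_zero hE (fderiv ℝ ρ p).toLinearMap
  have hbound (v : E) (hv : fderiv ℝ ρ p v = 0) :=
    ((hρ.isTangentToOrderTwo_setOf_eq_zero hρp hρ' hv hS).mono fun q hq => hq.1 hq.2)
      |>.eventually_le_add_mul_sq hunif
  exact ⟨u, hu0, fderiv_apply_eq_zero_of_norm_sq_le hF hcrit (hbound u hu) (hbound _ hIu)⟩

end Holomorphic

theorem not_immersion_of_degenerate_boundary_general {n N : ℕ} (hn : 2 ≤ n)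
    (Ω S : Set (EuclideanSpace ℂ (Fin n)))
    (hS : IsRealAnalyticHypersurface Ω S) (hSconn : IsConnected S)
    (F : EuclideanSpace ℂ (Fin n) → EuclideanSpace ℂ (Fin N))
    (hF : DifferentiableOn ℂ F Ω)
    (hone : ∀ p ∈ S, ‖F p‖ = 1)
    (hdiff : ∀ p ∈ S, fderiv ℝ (fun z => ‖F z‖ ^ 2) p = 0) :
    ∃ p ∈ S, ¬ Function.Injective (fderiv ℂ F p) := by
  obtain ⟨p₀, hp₀⟩ := hSconn.nonempty
  obtain ⟨O, hO, hp₀O, hOΩ, ρ, hρ, hρ', hSO⟩ := hS.2 p₀ hp₀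
  have hFO (z) (hz : z ∈ O) : DifferentiableAt ℂ F z :=
    hF.differentiableAt (mem_of_superset (hO.mem_nhds hz) hOΩ)
  obtain ⟨p, ⟨hpS, hpO⟩, hunif⟩ := exists_mem_uniformlyLeAddLittleO_of_inter_eq
    (φ := fun z => ‖F z‖ ^ 2) hO (fun q hq => (hρ q hq).continuousAt.continuousWithinAt)
    (fun q hq => ((hFO q hq).continuousAt.norm.pow 2).continuousWithinAt) hSO
    (fun q hq => ⟨by rw [hone q hq.1, one_pow],
      hdiff q hq.1 ▸ (((hFO q hq.2).restrictScalars ℝ).norm_sq ℂ).hasFDerivAt⟩)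
    ⟨p₀, hp₀, hp₀O⟩
  obtain ⟨u, hu0, hdFu⟩ := exists_ne_zero_fderiv_apply_eq_zero (by simpa using hn)
    (eventually_of_mem (hO.mem_nhds hpO) hFO) (hdiff p hpS) (hρ p hpO).contDiffAt
    (hSO.subset ⟨hpS, hpO⟩).2 (hρ' p hpO)
    (eventually_of_mem (hO.mem_nhds hpO) fun q hq hρq => (hSO.symm.subset ⟨hq, hρq⟩).1)
    (by rwa [hone p hpS, one_pow])
  exact ⟨p, hpS, fun hinj => hu0 (hinj (by rw [hdFu, map_zero]))⟩

/-- let `n ≥ 2`, `Ω ⊆ ℂ^n` open, `S ⊆ Ω` a connected smooth real-analytic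
real hypersurface, and `F : Ω → ℂ^N` holomorphic with `‖F‖ = 1` on `S` and with the real
differential of `z ↦ ‖F z‖²` vanishing at every point of `S`.  Then at some point `p ∈ S`
the complex derivative `dF|_p` fails to be injective; in particular `F` is not a
holomorphic immersion near `S`. -/
theorem not_immersion_of_degenerate_boundary {n N : ℕ} (hn : 2 ≤ n)
    (Ω S : Set (EuclideanSpace ℂ (Fin n))) (hΩopen : IsOpen Ω)
    (hS : IsRealAnalyticHypersurface Ω S) (hSconn : IsConnected S)
    (F : EuclideanSpace ℂ (Fin n) → EuclideanSpace ℂ (Fin N))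
    (hF : DifferentiableOn ℂ F Ω)
    (hone : ∀ p ∈ S, ‖F p‖ = 1)
    (hdiff : ∀ p ∈ S, fderiv ℝ (fun z => ‖F z‖ ^ 2) p = 0) :
    ∃ p ∈ S, ¬ Function.Injective (fderiv ℂ F p) :=
  not_immersion_of_degenerate_boundary_general hn Ω S hS hSconn F hF hone hdiff
end
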